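/- Let g be a stratified Lie algebra and s ⊆ g a subset such that exp(s) is a closed semigroup. If X ∈ w(s) and Y ∈ e(s) satisfy ad_Y^2(X) ∈ e(s), then [X,Y] ∈ e(s). -/

import Mathlib

/-!
A stratified Lie algebra is nilpotent, so for `Y` in the edge the conjugations `e^{ad_{cY}}`,
which preserve `s`, are polynomial in `c`. Since the edge is a closed subspace, reading off
coefficients shows that it is `ad_Y`-invariant; hence `ad_Y² X ∈ e(s)` puts all terms of order
`≥ 2` of `e^{t ad_Y} X` in the edge, and `X + t [Y, X]` lies in the wedge for every real `t`
(the wedge is a convex cone by the Trotter formula). Dividing by `|t|` and letting `t → ±∞`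
gives `±[Y, X] ∈ w(s)`, i.e. `[X, Y] ∈ e(s)`.
-/

/-- The tangent wedge of a subset `s` of a Lie algebra: `w(s) = {X : ℝ₊ X ⊆ s}`. -/
def wedge {L : Type} [LieRing L] [LieAlgebra ℝ L] (s : Set L) : Set L :=
  {X : L | ∀ t : ℝ, 0 < t → t • X ∈ s}

/-- The edge of the wedge of a subset `s` of a Lie algebra: `e(s) = {X : ℝ X ⊆ s}`. -/
def edge {L : Type} [LieRing L] [LieAlgebra ℝ L] (s : Set L) : Set L :=
  {X : L | ∀ t : ℝ, t • X ∈ s}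

/-- `e^{ad_X} Y`: the exponential series of the adjoint endomorphism `ad_X`,
applied to `Y`. -/
noncomputable def expAd {L : Type} [LieRing L] [LieAlgebra ℝ L] [TopologicalSpace L]
    (X Y : L) : L :=
  ∑' k : ℕ, ((k.factorial : ℝ)⁻¹ • ((LieAlgebra.ad ℝ L X) ^ k) Y)

/-- The span of all brackets `⁅x, y⁆` with `x ∈ A` and `y ∈ B`. -/
def lieSpan {L : Type} [LieRing L] [LieAlgebra ℝ L] (A B : Submodule ℝ L) :
    Submodule ℝ L :=
  Submodule.span ℝ {z : L | ∃ x ∈ A, ∃ y ∈ B, z = ⁅x, y⁆}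

/-- A stratification of step `s` on a Lie algebra `L`. -/
structure IsStratified (L : Type) [LieRing L] [LieAlgebra ℝ L]
    (s : ℕ) (V : ℕ → Submodule ℝ L) : Prop where
  pos : 0 < s
  last_ne_bot : V s ≠ ⊥
  zero_bot : V 0 = ⊥
  gt_bot : ∀ j, s < j → V j = ⊥
  iSup_eq_top : (⨆ j, V j) = ⊤
  indep : ∀ j, Disjoint (V j) (⨆ k, ⨆ _ : k ≠ j, V k)
  layer : ∀ j, 1 ≤ j → j < s → lieSpan (V 1) (V j) = V (j + 1)
  last : lieSpan (V 1) (V s) = ⊥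

open Set Filter Topology Finset LieAlgebra
open scoped Nat

namespace IsStratified

variable {L : Type} [LieRing L] [LieAlgebra ℝ L] {st : ℕ} {V : ℕ → Submodule ℝ L}

theorem eq_zero_of_mem_zero (hst : IsStratified L st V) {x : L} (hx : x ∈ V 0) : x = 0 := by
  rwa [hst.zero_bot, Submodule.mem_bot] at hx

theorem lieSpan_eq_succ (hst : IsStratified L st V) {i : ℕ} (hi : 1 ≤ i) :
    lieSpan (V 1) (V i) = V (i + 1) := by
  rcases lt_trichotomy i st with h | rfl | h
  · exact hst.layer i hi h
  · rw [hst.last, hst.gt_bot _ i.lt_succ_self]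
  · rw [hst.gt_bot i h, hst.gt_bot (i + 1) (by omega), eq_bot_iff, lieSpan, Submodule.span_le]
    rintro _ ⟨x, -, y, hy, rfl⟩
    rw [(Submodule.mem_bot ℝ).1 hy, lie_zero]
    exact zero_mem _

theorem lie_mem_succ (hst : IsStratified L st V) {j : ℕ} {x y : L} (hx : x ∈ V 1)
    (hy : y ∈ V j) : ⁅x, y⁆ ∈ V (j + 1) := by
  rcases Nat.eq_zero_or_pos j with rfl | hj
  · rw [hst.eq_zero_of_mem_zero hy, lie_zero]
    exact zero_mem _
  · rw [← hst.lieSpan_eq_succ hj]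
    exact Submodule.subset_span ⟨x, hx, y, hy, rfl⟩

theorem lie_mem (hst : IsStratified L st V) {i j : ℕ} {x y : L} (hx : x ∈ V i) (hy : y ∈ V j) :
    ⁅x, y⁆ ∈ V (i + j) := by
  rcases Nat.eq_zero_or_pos i with rfl | hi
  · rw [hst.eq_zero_of_mem_zero hx, zero_lie]
    exact zero_mem _
  induction i, hi using Nat.le_induction generalizing j x y with
  | base => rw [add_comm]; exact hst.lie_mem_succ hx hy
  | succ i hi ih =>
    rw [← hst.lieSpan_eq_succ hi] at hx
    induction hx using Submodule.span_induction with
    | mem z hz =>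
      obtain ⟨a, ha, b, hb, rfl⟩ := hz
      have hab : ⁅a, ⁅b, y⁆⁆ ∈ V (i + j + 1) := hst.lie_mem_succ ha (ih hb hy)
      have hba : ⁅b, ⁅a, y⁆⁆ ∈ V (i + (j + 1)) := ih hb (hst.lie_mem_succ ha hy)
      rw [lie_lie, show i + 1 + j = i + j + 1 by omega]
      exact sub_mem hab (by rwa [← add_assoc] at hba)
    | zero => rw [zero_lie]; exact zero_mem _
    | add a b _ _ ha hb => rw [add_lie]; exact add_mem ha hb
    | smul c a _ ha => rw [smul_lie]; exact Submodule.smul_mem _ c ha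

theorem lie_mem_iSup_ge (hst : IsStratified L st V) (Y : L) {m : ℕ} {Z : L}
    (hZ : Z ∈ ⨆ k ≥ m, V k) : ⁅Y, Z⁆ ∈ ⨆ k ≥ m + 1, V k := by
  refine (iSup₂_le fun k hk z hz => ?_ :
    (⨆ k ≥ m, V k) ≤ (⨆ k ≥ m + 1, V k).comap (ad ℝ L Y)) hZ
  have hY : Y ∈ ⨆ j, V j := hst.iSup_eq_top ▸ Submodule.mem_top
  refine Submodule.iSup_induction V (motive := fun y => ⁅y, z⁆ ∈ ⨆ k ≥ m + 1, V k) hY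
    (fun j y hy => ?_) (by rw [zero_lie]; exact zero_mem _)
    (fun a b ha hb => by rw [add_lie]; exact add_mem ha hb)
  rcases Nat.eq_zero_or_pos j with rfl | hj
  · rw [hst.eq_zero_of_mem_zero hy, zero_lie]
    exact zero_mem _
  · exact le_iSup₂ (f := fun k (_ : k ≥ m + 1) => V k) (j + k) (by omega) (hst.lie_mem hy hz)

theorem pow_ad_apply_mem (hst : IsStratified L st V) (Y Z : L) (n : ℕ) :
    (ad ℝ L Y ^ n) Z ∈ ⨆ k ≥ n, V k := by
  induction n with
  | zero =>
    have hZ : Z ∈ ⨆ k, V k := hst.iSup_eq_top ▸ Submodule.mem_top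
    exact iSup_le (fun k => le_iSup₂_of_le (f := fun k (_ : k ≥ 0) => V k) k k.zero_le le_rfl) hZ
  | succ n ih =>
    rw [pow_succ', Module.End.mul_apply, ad_apply]
    exact hst.lie_mem_iSup_ge Y ih

theorem isNilpotent_ad (hst : IsStratified L st V) (Y : L) : IsNilpotent (ad ℝ L Y) := by
  refine ⟨st + 1, LinearMap.ext fun Z => ?_⟩
  have hbot : (⨆ k ≥ st + 1, V k) = ⊥ :=
    eq_bot_iff.2 (iSup₂_le fun k hk => (hst.gt_bot k hk).le)
  have h := hst.pow_ad_apply_mem Y Z (st + 1)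
  rwa [hbot, Submodule.mem_bot] at h

end IsStratified

theorem Submodule.mem_of_forall_sum_pow_smul_mem {E : Type*} [AddCommGroup E] [Module ℝ E]
    [TopologicalSpace E] [ContinuousAdd E] [ContinuousSMul ℝ E] {M : Submodule ℝ E}
    (hM : IsClosed (M : Set E)) {n : ℕ} {D : ℕ → E} (hD : ∀ t : ℝ, ∑ k ∈ range n, t ^ k • D k ∈ M)
    {k : ℕ} (hk : k < n) : D k ∈ M := by
  induction n generalizing D k with
  | zero => omega
  | succ n ih =>
    have hD0 : D 0 ∈ M := by simpa [Finset.sum_range_succ'] using hD 0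
    have hquot : ∀ t : ℝ, t ≠ 0 → ∑ k ∈ range n, t ^ k • D (k + 1) ∈ M := by
      intro t ht
      have h : t • ∑ k ∈ range n, t ^ k • D (k + 1) = ∑ k ∈ range (n + 1), t ^ k • D k - D 0 := by
        simp [Finset.sum_range_succ', Finset.smul_sum, smul_smul, pow_succ']
      have hmem := M.smul_mem t⁻¹ (h ▸ M.sub_mem (hD t) hD0)
      rwa [smul_smul, inv_mul_cancel₀ ht, one_smul] at hmem
    have hcurve : ∀ t : ℝ, ∑ k ∈ range n, t ^ k • D (k + 1) ∈ M := by
      have hclosed : IsClosed {t : ℝ | ∑ k ∈ range n, t ^ k • D (k + 1) ∈ M} :=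
        hM.preimage (by fun_prop)
      have h : closure {(0 : ℝ)}ᶜ ⊆ _ := hclosed.closure_subset_iff.2 hquot
      rw [(dense_compl_singleton (0 : ℝ)).closure_eq] at h
      exact fun t => h (mem_univ t)
    rcases k with _ | k
    · exact hD0
    · exact ih hcurve (by omega)

section WedgeEdge

variable {L : Type} [LieRing L] [LieAlgebra ℝ L] {s : Set L}

theorem smul_mem_wedge {c : ℝ} (hc : 0 < c) {X : L} (hX : X ∈ wedge s) : c • X ∈ wedge s :=
  fun t ht => by rw [smul_smul]; exact hX _ (mul_pos ht hc)

theorem smul_mem_edge (c : ℝ) {X : L} (hX : X ∈ edge s) : c • X ∈ edge s :=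
  fun t => by rw [smul_smul]; exact hX _

theorem edge_subset_wedge : edge s ⊆ wedge s := fun _ hX t _ => hX t

theorem mem_edge_iff (h0 : (0 : L) ∈ s) {X : L} :
    X ∈ edge s ↔ X ∈ wedge s ∧ -X ∈ wedge s := by
  refine ⟨fun hX => ⟨edge_subset_wedge hX, edge_subset_wedge ?_⟩, fun ⟨hX, hX'⟩ t => ?_⟩
  · simpa using smul_mem_edge (-1) hX
  rcases lt_trichotomy t 0 with ht | rfl | ht
  · simpa using hX' (-t) (neg_pos.2 ht)
  · simpa using h0
  · exact hX t ht

def edgeSubmodule (h0 : (0 : L) ∈ s) (hadd : ∀ a ∈ wedge s, ∀ b ∈ wedge s, a + b ∈ wedge s) :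
    Submodule ℝ L where
  carrier := edge s
  zero_mem' t := by simpa using h0
  add_mem' {a b} ha hb := by
    rw [mem_edge_iff h0] at ha hb ⊢
    exact ⟨hadd _ ha.1 _ hb.1, neg_add a b ▸ hadd _ ha.2 _ hb.2⟩
  smul_mem' c _ hX := smul_mem_edge c hX

theorem mapsTo_wedge {f : L → L} (hf : ∀ (c : ℝ) X, f (c • X) = c • f X) (hs : MapsTo f s s) :
    MapsTo f (wedge s) (wedge s) :=
  fun X hX t ht => hf t X ▸ hs (hX t ht)

theorem mapsTo_edge {f : L → L} (hf : ∀ (c : ℝ) X, f (c • X) = c • f X) (hs : MapsTo f s s) :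
    MapsTo f (edge s) (edge s) :=
  fun X hX t => hf t X ▸ hs (hX t)

variable [TopologicalSpace L]

theorem isClosed_wedge [ContinuousConstSMul ℝ L] (hs : IsClosed s) : IsClosed (wedge s) := by
  have h : wedge s = ⋂ t > (0 : ℝ), (t • ·) ⁻¹' s := by ext; simp [wedge]
  rw [h]
  exact isClosed_biInter fun t _ => hs.preimage (continuous_const_smul t)

theorem isClosed_edge [ContinuousConstSMul ℝ L] (hs : IsClosed s) : IsClosed (edge s) := by
  have h : edge s = ⋂ t : ℝ, (t • ·) ⁻¹' s := by ext; simp [edge]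
  rw [h]
  exact isClosed_iInter fun t => hs.preimage (continuous_const_smul t)

theorem mem_wedge_of_forall_add_smul_mem [ContinuousAdd L] [ContinuousSMul ℝ L] (hs : IsClosed s)
    {X V : L} (h : ∀ t : ℝ, 0 < t → X + t • V ∈ wedge s) : V ∈ wedge s := by
  have hlim : Tendsto (fun n : ℕ => (n : ℝ)⁻¹ • X + V) atTop (𝓝 V) := by
    simpa using ((tendsto_inv_atTop_nhds_zero_nat (𝕜 := ℝ)).smul_const X).add_const V
  refine (isClosed_wedge hs).mem_of_tendsto hlim ((eventually_gt_atTop 0).mono fun n hn => ?_)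
  have hn' : (0 : ℝ) < n := by exact_mod_cast hn
  simpa [smul_add, smul_smul, hn'.ne'] using smul_mem_wedge (inv_pos.2 hn') (h n hn')

end WedgeEdge

section ExpAd

variable {L : Type} [LieRing L] [LieAlgebra ℝ L] [TopologicalSpace L]

theorem expAd_smul_eq_sum {Y : L} {N : ℕ} (hN : ad ℝ L Y ^ N = 0) (c : ℝ) (Z : L) :
    expAd (c • Y) Z = ∑ k ∈ range N, c ^ k • ((k ! : ℝ)⁻¹ • (ad ℝ L Y ^ k) Z) := by
  have hterm (k : ℕ) : (k ! : ℝ)⁻¹ • (ad ℝ L (c • Y) ^ k) Z =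
      c ^ k • ((k ! : ℝ)⁻¹ • (ad ℝ L Y ^ k) Z) := by
    rw [map_smul, smul_pow, LinearMap.smul_apply, smul_comm]
  rw [expAd, tsum_eq_sum (s := range N) fun k hk => ?_]
  · exact Finset.sum_congr rfl fun k _ => hterm k
  · rw [hterm, pow_eq_zero_of_le (by simpa using hk) hN]
    simp only [LinearMap.zero_apply, smul_zero]

theorem expAd_smul_smul_right {Y : L} {N : ℕ} (hN : ad ℝ L Y ^ N = 0) (c u : ℝ) (Z : L) :
    expAd (c • Y) (u • Z) = u • expAd (c • Y) Z := by
  simp only [expAd_smul_eq_sum hN, map_smul, Finset.smul_sum]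
  exact Finset.sum_congr rfl fun k _ => by rw [smul_comm u, smul_comm u]

variable [ContinuousAdd L] [ContinuousSMul ℝ L] {s : Set L} {Y : L} {N : ℕ}

theorem pow_ad_apply_mem_edge (hs : IsClosed s) (h0 : (0 : L) ∈ s)
    (hadd : ∀ a ∈ wedge s, ∀ b ∈ wedge s, a + b ∈ wedge s) (hN : ad ℝ L Y ^ N = 0)
    (hconj : ∀ c : ℝ, MapsTo (expAd (c • Y)) s s) {Z : L} (hZ : Z ∈ edge s) (k : ℕ) :
    (ad ℝ L Y ^ k) Z ∈ edge s := by
  let E := edgeSubmodule h0 hadd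
  rcases lt_or_ge k N with hk | hk
  · have hcurve (c : ℝ) : ∑ j ∈ range N, c ^ j • ((j ! : ℝ)⁻¹ • (ad ℝ L Y ^ j) Z) ∈ E :=
      expAd_smul_eq_sum hN c Z ▸ mapsTo_edge (expAd_smul_smul_right hN c) (hconj c) hZ
    have hcoeff := E.smul_mem (k ! : ℝ)
      (Submodule.mem_of_forall_sum_pow_smul_mem (isClosed_edge hs) hcurve hk)
    rwa [smul_smul, mul_inv_cancel₀ (by positivity), one_smul] at hcoeff
  · rw [pow_eq_zero_of_le hk hN, LinearMap.zero_apply]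
    exact E.zero_mem

theorem add_smul_lie_mem_wedge (hs : IsClosed s) (h0 : (0 : L) ∈ s)
    (hadd : ∀ a ∈ wedge s, ∀ b ∈ wedge s, a + b ∈ wedge s) (hN : ad ℝ L Y ^ N = 0)
    (hconj : ∀ c : ℝ, MapsTo (expAd (c • Y)) s s) {X : L} (hX : X ∈ wedge s)
    (hadsq : ⁅Y, ⁅Y, X⁆⁆ ∈ edge s) (t : ℝ) : X + t • ⁅Y, X⁆ ∈ wedge s := by
  let E := edgeSubmodule h0 hadd
  -- with exponent `N + 2` the terms of order `0` and `1` split off the expansion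
  have hN2 : ad ℝ L Y ^ (N + 2) = 0 := pow_eq_zero_of_le (by omega) hN
  set tail := ∑ k ∈ range N, t ^ (k + 2) • (((k + 2) ! : ℝ)⁻¹ • (ad ℝ L Y ^ (k + 2)) X)
  have htail : tail ∈ E := by
    refine E.sum_mem fun k _ => E.smul_mem _ (E.smul_mem _ ?_)
    rw [pow_add, Module.End.mul_apply]
    exact pow_ad_apply_mem_edge hs h0 hadd hN hconj (by simpa [sq] using hadsq) k
  have hexp := mapsTo_wedge (expAd_smul_smul_right hN2 t) (hconj t) hX
  rw [expAd_smul_eq_sum hN2, Finset.sum_range_succ', Finset.sum_range_succ'] at hexp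
  simp only [zero_add, pow_zero, pow_one, Nat.factorial_zero, Nat.factorial_one, Nat.cast_one,
    inv_one, one_smul, Module.End.one_apply, ad_apply] at hexp
  have hsplit : X + t • ⁅Y, X⁆ = (tail + t • ⁅Y, X⁆ + X) + -tail := by abel
  rw [hsplit]
  exact hadd _ hexp _ (edge_subset_wedge (E.neg_mem htail))

theorem lie_mem_edge_of_adsq_mem_edge (hs : IsClosed s) (h0 : (0 : L) ∈ s)
    (hadd : ∀ a ∈ wedge s, ∀ b ∈ wedge s, a + b ∈ wedge s) (hN : ad ℝ L Y ^ N = 0)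
    (hconj : ∀ c : ℝ, MapsTo (expAd (c • Y)) s s) {X : L} (hX : X ∈ wedge s)
    (hadsq : ⁅Y, ⁅Y, X⁆⁆ ∈ edge s) : ⁅X, Y⁆ ∈ edge s := by
  have hwedge := add_smul_lie_mem_wedge hs h0 hadd hN hconj hX hadsq
  rw [← lie_skew, mem_edge_iff h0, neg_neg]
  exact ⟨mem_wedge_of_forall_add_smul_mem (X := X) hs fun t _ => by
      rw [smul_neg, ← neg_smul]; exact hwedge (-t),
    mem_wedge_of_forall_add_smul_mem hs fun t _ => hwedge t⟩

end ExpAd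

section ClosedSubmonoid

variable {L G : Type} [Group G] {exp : L → G}

theorem exp_zero_eq_one [AddCommGroup L] [Module ℝ L]
    (hline : ∀ (X : L) (t u : ℝ), exp ((t + u) • X) = exp (t • X) * exp (u • X)) : exp 0 = 1 := by
  simpa using hline 0 0 0

theorem exp_neg_eq_inv [AddCommGroup L] [Module ℝ L]
    (hline : ∀ (X : L) (t u : ℝ), exp ((t + u) • X) = exp (t • X) * exp (u • X)) (X : L) :
    exp (-X) = (exp X)⁻¹ := by
  refine eq_inv_of_mul_eq_one_right ?_
  simpa [exp_zero_eq_one hline] using (hline X 1 (-1)).symm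

variable [LieRing L] [LieAlgebra ℝ L] {S : Submonoid G}

theorem mapsTo_expAd_preimage [TopologicalSpace L]
    (hline : ∀ (X : L) (t u : ℝ), exp ((t + u) • X) = exp (t • X) * exp (u • X))
    (hconj : ∀ X Y : L, exp X * exp Y * (exp X)⁻¹ = exp (expAd X Y))
    {Y : L} (hY : Y ∈ edge (exp ⁻¹' S)) : MapsTo (expAd Y) (exp ⁻¹' S) (exp ⁻¹' S) := by
  intro Z hZ
  rw [Set.mem_preimage, ← hconj, ← exp_neg_eq_inv hline]
  exact mul_mem (mul_mem (by simpa using hY 1) hZ) (by simpa using hY (-1))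

theorem add_mem_wedge_preimage [TopologicalSpace G] (hS : IsClosed (S : Set G))
    (htrot : ∀ X Y : L, Tendsto (fun n : ℕ => (exp ((n : ℝ)⁻¹ • X) * exp ((n : ℝ)⁻¹ • Y)) ^ n)
      atTop (𝓝 (exp (X + Y))))
    {a b : L} (ha : a ∈ wedge (exp ⁻¹' S)) (hb : b ∈ wedge (exp ⁻¹' S)) :
    a + b ∈ wedge (exp ⁻¹' S) := by
  intro t ht
  have hmem : ∀ᶠ n : ℕ in atTop, (exp ((n : ℝ)⁻¹ • t • a) * exp ((n : ℝ)⁻¹ • t • b)) ^ n ∈ S := by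
    refine (eventually_gt_atTop 0).mono fun n hn => ?_
    have hpos : 0 < (n : ℝ)⁻¹ * t := mul_pos (by positivity) ht
    rw [smul_smul, smul_smul]
    exact pow_mem (mul_mem (ha _ hpos) (hb _ hpos)) n
  rw [Set.mem_preimage, smul_add]
  exact hS.mem_of_tendsto (htrot _ _) hmem

end ClosedSubmonoid

theorem bracket_in_edge_of_adsq_in_edge_general
    (L : Type) [LieRing L] [LieAlgebra ℝ L]
    [TopologicalSpace L] [IsTopologicalAddGroup L] [ContinuousSMul ℝ L]
    (st : ℕ) (V : ℕ → Submodule ℝ L) (hst : IsStratified L st V)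
    (G : Type) [Group G] [TopologicalSpace G]
    (exp : L → G)
    (hcont : Continuous exp)
    (hinj : Function.Injective exp)
    (hline : ∀ (X : L) (t u : ℝ), exp ((t + u) • X) = exp (t • X) * exp (u • X))
    (hconj : ∀ X Y : L, exp X * exp Y * (exp X)⁻¹ = exp (expAd X Y))
    (htrot : ∀ X Y : L, Filter.Tendsto
      (fun n : ℕ => (exp ((n : ℝ)⁻¹ • X) * exp ((n : ℝ)⁻¹ • Y)) ^ n)
      Filter.atTop (nhds (exp (X + Y))))
    (s : Set L)
    (hsem : ∀ x ∈ s, ∀ y ∈ s, ∃ z ∈ s, exp x * exp y = exp z)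
    (hcl : IsClosed (exp '' s))
    (X Y : L) (hX : X ∈ wedge s) (hY : Y ∈ edge s)
    (hadsq : ⁅Y, ⁅Y, X⁆⁆ ∈ edge s) :
    ⁅X, Y⁆ ∈ edge s := by
  have h0 : (0 : L) ∈ s := by simpa using hY 0
  let S : Submonoid G :=
    { carrier := exp '' s
      mul_mem' := by
        rintro _ _ ⟨x, hx, rfl⟩ ⟨y, hy, rfl⟩
        obtain ⟨z, hz, hxy⟩ := hsem x hx y hy
        exact ⟨z, hz, hxy.symm⟩
      one_mem' := ⟨0, h0, exp_zero_eq_one hline⟩ }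
  have hs : exp ⁻¹' S = s := hinj.preimage_image s
  have hadd : ∀ a ∈ wedge s, ∀ b ∈ wedge s, a + b ∈ wedge s := by
    rw [← hs]
    exact fun a ha b hb => add_mem_wedge_preimage hcl htrot ha hb
  have hconj' (c : ℝ) : MapsTo (expAd (c • Y)) s s := by
    rw [← hs] at hY ⊢
    exact mapsTo_expAd_preimage hline hconj (smul_mem_edge c hY)
  obtain ⟨N, hN⟩ := hst.isNilpotent_ad Y
  exact lie_mem_edge_of_adsq_mem_edge (hs ▸ hcl.preimage hcont) h0 hadd hN hconj' hX hadsq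

/-- Let `g` be a stratified Lie algebra (with simply connected group `G` and injective
exponential map) and `s ⊆ g` a subset such that `exp(s)` is a closed semigroup. If
`X ∈ w(s)` and `Y ∈ e(s)` satisfy `ad_Y² X ∈ e(s)`, then `[X,Y] ∈ e(s)`. -/
theorem bracket_in_edge_of_adsq_in_edge
    (L : Type) [LieRing L] [LieAlgebra ℝ L] [FiniteDimensional ℝ L]
    [TopologicalSpace L] [IsTopologicalAddGroup L] [ContinuousSMul ℝ L]
    (st : ℕ) (V : ℕ → Submodule ℝ L) (hst : IsStratified L st V)
    (G : Type) [Group G] [TopologicalSpace G] [IsTopologicalGroup G]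
    (exp : L → G)
    (hcont : Continuous exp)
    (hinj : Function.Injective exp)
    (hline : ∀ (X : L) (t u : ℝ), exp ((t + u) • X) = exp (t • X) * exp (u • X))
    (hconj : ∀ X Y : L, exp X * exp Y * (exp X)⁻¹ = exp (expAd X Y))
    (htrot : ∀ X Y : L, Filter.Tendsto
      (fun n : ℕ => (exp ((n : ℝ)⁻¹ • X) * exp ((n : ℝ)⁻¹ • Y)) ^ n)
      Filter.atTop (nhds (exp (X + Y))))
    (s : Set L)
    (hsem : ∀ x ∈ s, ∀ y ∈ s, ∃ z ∈ s, exp x * exp y = exp z)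
    (hcl : IsClosed (exp '' s))
    (X Y : L) (hX : X ∈ wedge s) (hY : Y ∈ edge s)
    (hadsq : ⁅Y, ⁅Y, X⁆⁆ ∈ edge s) :
    ⁅X, Y⁆ ∈ edge s :=
  bracket_in_edge_of_adsq_in_edge_general L st V hst G exp hcont hinj hline hconj htrot s hsem hcl X
    Y hX hY hadsq
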